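/- Let X be a Banach space, let u₁, u₂, w₁, w₂ ∈ X be elements with ‖u₁‖, ‖u₂‖ ≤ 2m, let F : X × X → X be bilinear with ‖F(a,b)‖ ≤ C‖a‖·‖b‖, and let θ_m be the cutoff of the previous context (Lipschitz with constant C'/m). Then ‖θ_m(‖u₁‖)F(u₁,u₁) − θ_m(‖u₂‖)F(u₂,u₂)‖ ≤ C''·m·‖u₁ − u₂‖ for a constant C'' depending only on C, C'. -/
import Mathlib


/-- Lipschitz estimate for the truncated quadratic nonlinearity: there is a
constant `C''` depending only on the bilinear bound `C` and the cutoff Lipschitz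
constant `C'` such that
`‖θ_m(‖u₁‖) F(u₁,u₁) − θ_m(‖u₂‖) F(u₂,u₂)‖ ≤ C'' m ‖u₁ − u₂‖`. -/
theorem truncated_quadratic_lipschitz (C C' : ℝ) (hC : 0 ≤ C) (hC' : 0 ≤ C') :
    ∃ C'' : ℝ, 0 ≤ C'' ∧
      ∀ (X : Type) [inst : NormedAddCommGroup X] [inst2 : NormedSpace ℝ X]
        (F : X →L[ℝ] X →L[ℝ] X) (θm : ℝ → ℝ) (m : ℝ) (u₁ u₂ : X),
        0 < m →
        (∀ a b : X, ‖F a b‖ ≤ C * ‖a‖ * ‖b‖) →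
        (∀ r : ℝ, 0 ≤ r → θm r ∈ Set.Icc (0:ℝ) 1) →
        (∀ r₁ r₂ : ℝ, 0 ≤ r₁ → 0 ≤ r₂ → |θm r₁ - θm r₂| ≤ C' / m * |r₁ - r₂|) →
        ‖u₁‖ ≤ 2 * m → ‖u₂‖ ≤ 2 * m →
        ‖θm ‖u₁‖ • F u₁ u₁ - θm ‖u₂‖ • F u₂ u₂‖ ≤ C'' * m * ‖u₁ - u₂‖ := by
  refine ⟨4 * C * C' + 4 * C, by positivity, ?_⟩
  intro X _ _ F θm m u₁ u₂ hm hF hθ hθL h1 h2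
  have hθ1 := hθ ‖u₁‖ (norm_nonneg _)
  have hθ2 := hθ ‖u₂‖ (norm_nonneg _)
  have key : θm ‖u₁‖ • F u₁ u₁ - θm ‖u₂‖ • F u₂ u₂ =
      (θm ‖u₁‖ - θm ‖u₂‖) • F u₁ u₁
        + θm ‖u₂‖ • (F (u₁ - u₂) u₁ + F u₂ (u₁ - u₂)) := by
    have hsplit : F u₁ u₁ - F u₂ u₂ = F (u₁ - u₂) u₁ + F u₂ (u₁ - u₂) := by
      simp [map_sub, ContinuousLinearMap.sub_apply]
    rw [← hsplit]
    module
  rw [key]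
  have hd : ‖u₁ - u₂‖ ≥ 0 := norm_nonneg _
  have hA : ‖(θm ‖u₁‖ - θm ‖u₂‖) • F u₁ u₁‖ ≤ 4 * C * C' * m * ‖u₁ - u₂‖ := by
    rw [norm_smul, Real.norm_eq_abs]
    have h1' : |θm ‖u₁‖ - θm ‖u₂‖| ≤ C' / m * ‖u₁ - u₂‖ := by
      calc |θm ‖u₁‖ - θm ‖u₂‖| ≤ C' / m * |‖u₁‖ - ‖u₂‖| :=
            hθL _ _ (norm_nonneg _) (norm_nonneg _)
        _ ≤ C' / m * ‖u₁ - u₂‖ := by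
            gcongr
            exact abs_norm_sub_norm_le _ _
    have h2' : ‖F u₁ u₁‖ ≤ C * (2 * m) * (2 * m) := by
      calc ‖F u₁ u₁‖ ≤ C * ‖u₁‖ * ‖u₁‖ := hF _ _
        _ ≤ C * (2 * m) * (2 * m) := by nlinarith [norm_nonneg u₁, mul_le_mul h1 h1 (norm_nonneg u₁) (le_trans (norm_nonneg u₁) h1)]
    calc |θm ‖u₁‖ - θm ‖u₂‖| * ‖F u₁ u₁‖
        ≤ (C' / m * ‖u₁ - u₂‖) * (C * (2 * m) * (2 * m)) := by
          exact mul_le_mul h1' h2' (norm_nonneg _)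
            (by positivity)
      _ = 4 * C * C' * m * ‖u₁ - u₂‖ := by field_simp; ring
  have hB : ‖θm ‖u₂‖ • (F (u₁ - u₂) u₁ + F u₂ (u₁ - u₂))‖ ≤ 4 * C * m * ‖u₁ - u₂‖ := by
    rw [norm_smul, Real.norm_eq_abs, abs_of_nonneg hθ2.1]
    have hsum : ‖F (u₁ - u₂) u₁ + F u₂ (u₁ - u₂)‖ ≤ 4 * C * m * ‖u₁ - u₂‖ := by
      calc ‖F (u₁ - u₂) u₁ + F u₂ (u₁ - u₂)‖
          ≤ ‖F (u₁ - u₂) u₁‖ + ‖F u₂ (u₁ - u₂)‖ := norm_add_le _ _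
        _ ≤ C * ‖u₁ - u₂‖ * ‖u₁‖ + C * ‖u₂‖ * ‖u₁ - u₂‖ := add_le_add (hF _ _) (hF _ _)
        _ ≤ C * ‖u₁ - u₂‖ * (2 * m) + C * (2 * m) * ‖u₁ - u₂‖ := by gcongr
        _ = 4 * C * m * ‖u₁ - u₂‖ := by ring
    calc θm ‖u₂‖ * ‖F (u₁ - u₂) u₁ + F u₂ (u₁ - u₂)‖
        ≤ 1 * (4 * C * m * ‖u₁ - u₂‖) :=
          mul_le_mul hθ2.2 hsum (norm_nonneg _) zero_le_one
      _ = 4 * C * m * ‖u₁ - u₂‖ := one_mul _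
  calc ‖_ + _‖ ≤ _ := norm_add_le _ _
    _ ≤ 4 * C * C' * m * ‖u₁ - u₂‖ + 4 * C * m * ‖u₁ - u₂‖ := add_le_add hA hB
    _ = (4 * C * C' + 4 * C) * m * ‖u₁ - u₂‖ := by ring
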